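/- arXiv:2412.10024 — 5 statements merged into one kernel-verified Lean document; each statement's English description precedes it below -/
import Mathlib

section
/- Consider the single-player test-allocation problem with K = 2 attributes, prior variances Σ⁰₁, Σ⁰₂ > 0, budget T > 0, and weights α₁, α₂ ≥ 0 with (α₁, α₂) ≠ (0,0) and α₁Σ⁰₁ ≥ α₂Σ⁰₂ (so α₁ > 0). Then the function σ̂²(τ) := α₁²Σ⁰₁/(1+τ₁Σ⁰₁) + α₂²Σ⁰₂/(1+τ₂Σ⁰₂) has a unique minimizer τ* over 𝒯, given as follows: if α₂ = 0 then τ* = (T, 0); if α₂ > 0 then, setting T̄ := α₁/(α₂Σ⁰₂) − 1/Σ⁰₁, one has τ*₁ = T when T ≤ T̄ and τ*₁ = T̄ + (α₁/(α₁+α₂))(T − T̄) when T > T̄, with τ*₂ = T − τ*₁ in both cases. -/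
/-!
Each summand `t ↦ a² S / (1 + t S)` is convex, and it exceeds its tangent line at `s` by exactly
`a² S³ (t - s)² / ((1 + t S)(1 + s S)²)`. Hence an allocation satisfying the first-order
(KKT) condition — the marginal reductions `(aₖ Sₖ / (1 + τₖ Sₖ))²` are equal on an interior
allocation, or the first dominates the second at the corner `(T, 0)` — is a minimizer, and
uniquely so because the tangent gaps vanish only at the point of tangency. The explicit
formula for `τ*₁` is where the marginal reductions balance, clipped to the budget `T`.
-/

noncomputable section

namespace TestAllocation

def weightedPosteriorVar (a S t : ℝ) : ℝ := a ^ 2 * (S / (1 + t * S))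

/-- The rate `-d/dt` at which testing lowers `weightedPosteriorVar a S t`. -/
def marginalReduction (a S t : ℝ) : ℝ := (a * S / (1 + t * S)) ^ 2

def objective (a₁ a₂ S₁ S₂ : ℝ) (τ : ℝ × ℝ) : ℝ :=
  weightedPosteriorVar a₁ S₁ τ.1 + weightedPosteriorVar a₂ S₂ τ.2

def allocations (T : ℝ) : Set (ℝ × ℝ) := {τ | 0 ≤ τ.1 ∧ 0 ≤ τ.2 ∧ τ.1 + τ.2 ≤ T}

/-- The budget at which `marginalReduction a₁ S₁ T = marginalReduction a₂ S₂ 0`. -/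
def threshold (a₁ a₂ S₁ S₂ : ℝ) : ℝ := a₁ / (a₂ * S₂) - 1 / S₁

def balancedAllocation (a₁ a₂ S₁ S₂ T : ℝ) : ℝ :=
  threshold a₁ a₂ S₁ S₂ + a₁ / (a₁ + a₂) * (T - threshold a₁ a₂ S₁ S₂)

def IsUniqueMinOn {α : Type*} (f : α → ℝ) (s : Set α) (x : α) : Prop :=
  x ∈ s ∧ (∀ y ∈ s, f x ≤ f y) ∧ ∀ y ∈ s, f y = f x → y = x

section Tangent

variable {a S s t : ℝ}

lemma weightedPosteriorVar_eq_tangent_add (hS : 0 < S) (hs : 0 ≤ s) (ht : 0 ≤ t) :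
    weightedPosteriorVar a S t =
      weightedPosteriorVar a S s - marginalReduction a S s * (t - s)
        + a ^ 2 * S ^ 3 * (t - s) ^ 2 / ((1 + t * S) * (1 + s * S) ^ 2) := by
  have : 0 < 1 + t * S := by positivity
  have : 0 < 1 + s * S := by positivity
  unfold weightedPosteriorVar marginalReduction
  field_simp
  ring

lemma tangent_le_weightedPosteriorVar (hS : 0 < S) (hs : 0 ≤ s) (ht : 0 ≤ t) :
    weightedPosteriorVar a S s - marginalReduction a S s * (t - s) ≤
      weightedPosteriorVar a S t := by
  rw [weightedPosteriorVar_eq_tangent_add hS hs ht, le_add_iff_nonneg_right]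
  positivity

lemma eq_of_weightedPosteriorVar_eq_tangent (hS : 0 < S) (hs : 0 ≤ s) (ht : 0 ≤ t)
    (h : weightedPosteriorVar a S t =
      weightedPosteriorVar a S s - marginalReduction a S s * (t - s)) :
    a = 0 ∨ t = s := by
  rw [weightedPosteriorVar_eq_tangent_add hS hs ht, add_eq_left,
    div_eq_zero_iff] at h
  have hdt : 1 + t * S ≠ 0 := by positivity
  have hds : 1 + s * S ≠ 0 := by positivity
  simpa [hS.ne', sub_eq_zero, hdt, hds] using h

end Tangent

section KKT

variable {a₁ a₂ S₁ S₂ s₁ s₂ t₁ t₂ : ℝ}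

lemma objective_le_of_kkt (hS₁ : 0 < S₁) (hS₂ : 0 < S₂)
    (hs₁ : 0 ≤ s₁) (hs₂ : 0 ≤ s₂) (ht₁ : 0 ≤ t₁) (ht₂ : 0 ≤ t₂)
    (hkkt : marginalReduction a₁ S₁ s₁ * (t₁ - s₁) + marginalReduction a₂ S₂ s₂ * (t₂ - s₂) ≤ 0) :
    objective a₁ a₂ S₁ S₂ (s₁, s₂) ≤ objective a₁ a₂ S₁ S₂ (t₁, t₂) := by
  have h₁ := tangent_le_weightedPosteriorVar (a := a₁) hS₁ hs₁ ht₁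
  have h₂ := tangent_le_weightedPosteriorVar (a := a₂) hS₂ hs₂ ht₂
  unfold objective
  linarith

lemma eq_of_objective_eq_of_kkt (hS₁ : 0 < S₁) (hS₂ : 0 < S₂)
    (hs₁ : 0 ≤ s₁) (hs₂ : 0 ≤ s₂) (ht₁ : 0 ≤ t₁) (ht₂ : 0 ≤ t₂)
    (hkkt : marginalReduction a₁ S₁ s₁ * (t₁ - s₁) + marginalReduction a₂ S₂ s₂ * (t₂ - s₂) ≤ 0)
    (heq : objective a₁ a₂ S₁ S₂ (t₁, t₂) = objective a₁ a₂ S₁ S₂ (s₁, s₂)) :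
    (a₁ = 0 ∨ t₁ = s₁) ∧ (a₂ = 0 ∨ t₂ = s₂) := by
  have h₁ := tangent_le_weightedPosteriorVar (a := a₁) hS₁ hs₁ ht₁
  have h₂ := tangent_le_weightedPosteriorVar (a := a₂) hS₂ hs₂ ht₂
  unfold objective at heq
  exact ⟨eq_of_weightedPosteriorVar_eq_tangent hS₁ hs₁ ht₁ (by linarith),
    eq_of_weightedPosteriorVar_eq_tangent hS₂ hs₂ ht₂ (by linarith)⟩

end KKT

section Minimizers

variable {a₁ a₂ S₁ S₂ T : ℝ}

theorem isUniqueMinOn_corner (hS₁ : 0 < S₁) (hS₂ : 0 < S₂) (hT : 0 ≤ T) (ha₁ : a₁ ≠ 0)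
    (hdom : marginalReduction a₂ S₂ 0 ≤ marginalReduction a₁ S₁ T) :
    IsUniqueMinOn (objective a₁ a₂ S₁ S₂) (allocations T) (T, 0) := by
  have hkkt : ∀ τ ∈ allocations T,
      marginalReduction a₁ S₁ T * (τ.1 - T) + marginalReduction a₂ S₂ 0 * (τ.2 - 0) ≤ 0 := by
    rintro τ ⟨-, hτ₂, hτT⟩
    have : 0 ≤ marginalReduction a₂ S₂ 0 := sq_nonneg _
    nlinarith
  refine ⟨⟨hT, le_rfl, by simp⟩, ?_, ?_⟩
  · rintro ⟨t₁, t₂⟩ hτ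
    exact objective_le_of_kkt hS₁ hS₂ hT le_rfl hτ.1 hτ.2.1 (hkkt _ hτ)
  · rintro ⟨t₁, t₂⟩ hτ heq
    obtain ⟨h₁, -⟩ := eq_of_objective_eq_of_kkt hS₁ hS₂ hT le_rfl hτ.1 hτ.2.1 (hkkt _ hτ) heq
    obtain rfl := h₁.resolve_left ha₁
    obtain ⟨-, h₂, h₂T⟩ := hτ
    simp only [Prod.mk.injEq, true_and]
    linarith

theorem isUniqueMinOn_interior (hS₁ : 0 < S₁) (hS₂ : 0 < S₂) (ha₁ : a₁ ≠ 0) (ha₂ : a₂ ≠ 0)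
    {s : ℝ} (hs : 0 ≤ s) (hsT : s ≤ T)
    (hbal : marginalReduction a₁ S₁ s = marginalReduction a₂ S₂ (T - s)) :
    IsUniqueMinOn (objective a₁ a₂ S₁ S₂) (allocations T) (s, T - s) := by
  have hkkt : ∀ τ ∈ allocations T,
      marginalReduction a₁ S₁ s * (τ.1 - s) + marginalReduction a₂ S₂ (T - s) * (τ.2 - (T - s))
        ≤ 0 := by
    rintro τ ⟨-, -, hτT⟩
    have : 0 ≤ marginalReduction a₁ S₁ s := sq_nonneg _
    rw [← hbal]
    nlinarith
  have hTs : 0 ≤ T - s := sub_nonneg.2 hsT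
  refine ⟨⟨hs, hTs, by simp⟩, ?_, ?_⟩
  · rintro ⟨t₁, t₂⟩ hτ
    exact objective_le_of_kkt hS₁ hS₂ hs hTs hτ.1 hτ.2.1 (hkkt _ hτ)
  · rintro ⟨t₁, t₂⟩ hτ heq
    obtain ⟨h₁, h₂⟩ := eq_of_objective_eq_of_kkt hS₁ hS₂ hs hTs hτ.1 hτ.2.1 (hkkt _ hτ) heq
    exact Prod.ext (h₁.resolve_left ha₁) (h₂.resolve_left ha₂)

end Minimizers

section Balance

variable {a₁ a₂ S₁ S₂ T : ℝ}

lemma threshold_nonneg (ha₂ : 0 < a₂) (hS₁ : 0 < S₁) (hS₂ : 0 < S₂)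
    (hsort : a₂ * S₂ ≤ a₁ * S₁) :
    0 ≤ threshold a₁ a₂ S₁ S₂ := by
  rw [threshold, sub_nonneg, div_le_div_iff₀ hS₁ (by positivity)]
  linarith

lemma marginalReduction_zero_le_of_le_threshold (ha₂ : 0 < a₂) (hS₁ : 0 < S₁) (hS₂ : 0 < S₂)
    (hT : 0 ≤ T) (hle : T ≤ threshold a₁ a₂ S₁ S₂) :
    marginalReduction a₂ S₂ 0 ≤ marginalReduction a₁ S₁ T := by
  have hd : 0 < 1 + T * S₁ := by positivity
  have h : a₂ * S₂ / (1 + 0 * S₂) ≤ a₁ * S₁ / (1 + T * S₁) := by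
    rw [zero_mul, add_zero, div_one, le_div_iff₀ hd]
    rw [threshold, le_sub_iff_add_le, le_div_iff₀ (by positivity)] at hle
    field_simp at hle
    linarith
  exact pow_le_pow_left₀ (by positivity) h 2

lemma balancedAllocation_mem_Icc (ha₁ : 0 < a₁) (ha₂ : 0 < a₂) (hS₁ : 0 < S₁) (hS₂ : 0 < S₂)
    (hsort : a₂ * S₂ ≤ a₁ * S₁) (hT : threshold a₁ a₂ S₁ S₂ < T) :
    balancedAllocation a₁ a₂ S₁ S₂ T ∈ Set.Icc 0 T := by
  have hθ := threshold_nonneg ha₂ hS₁ hS₂ hsort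
  have hw : a₁ / (a₁ + a₂) ≤ 1 := (div_le_one (by positivity)).2 (by linarith)
  have hw' : 0 ≤ a₁ / (a₁ + a₂) := by positivity
  constructor <;> unfold balancedAllocation <;> nlinarith

lemma marginalReduction_balancedAllocation (ha₁ : 0 < a₁) (ha₂ : 0 < a₂)
    (hS₁ : 0 < S₁) (hS₂ : 0 < S₂)
    (hs : balancedAllocation a₁ a₂ S₁ S₂ T ∈ Set.Icc 0 T) :
    marginalReduction a₁ S₁ (balancedAllocation a₁ a₂ S₁ S₂ T) =
      marginalReduction a₂ S₂ (T - balancedAllocation a₁ a₂ S₁ S₂ T) := by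
  have h₁ : 0 < 1 + balancedAllocation a₁ a₂ S₁ S₂ T * S₁ := by nlinarith [hs.1]
  have h₂ : 0 < 1 + (T - balancedAllocation a₁ a₂ S₁ S₂ T) * S₂ := by nlinarith [hs.2]
  unfold marginalReduction
  congr 1
  rw [div_eq_div_iff h₁.ne' h₂.ne']
  unfold balancedAllocation threshold
  field_simp
  ring

end Balance

end TestAllocation

end

open TestAllocation in
theorem stmt_0_general
    (S1 S2 T a1 a2 : ℝ)
    (hS1 : 0 < S1) (hS2 : 0 < S2) (hT : 0 < T)
    (ha2 : 0 ≤ a2)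
    (hne : ¬ (a1 = 0 ∧ a2 = 0))
    (hsort : a2 * S2 ≤ a1 * S1) :
    let 𝒯 : Set (ℝ × ℝ) := {τ | 0 ≤ τ.1 ∧ 0 ≤ τ.2 ∧ τ.1 + τ.2 ≤ T}
    let σhat2 : ℝ × ℝ → ℝ := fun τ =>
      a1 ^ 2 * (S1 / (1 + τ.1 * S1)) + a2 ^ 2 * (S2 / (1 + τ.2 * S2))
    let Tbar : ℝ := a1 / (a2 * S2) - 1 / S1
    let τ1 : ℝ :=
      if a2 = 0 then T
      else if T ≤ Tbar then T else Tbar + (a1 / (a1 + a2)) * (T - Tbar)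
    let τstar : ℝ × ℝ := (τ1, T - τ1)
    τstar ∈ 𝒯 ∧ (∀ τ ∈ 𝒯, σhat2 τstar ≤ σhat2 τ) ∧
      (∀ τ ∈ 𝒯, σhat2 τ = σhat2 τstar → τ = τstar) := by
  have ha1 : 0 < a1 := by
    have : 0 ≤ a1 * S1 := (mul_nonneg ha2 hS2.le).trans hsort
    refine lt_of_le_of_ne (nonneg_of_mul_nonneg_left this hS1) fun h ↦ hne ⟨h.symm, ?_⟩
    subst h
    nlinarith
  intro 𝒯 σhat2 Tbar τ1 τstar
  show IsUniqueMinOn (objective a1 a2 S1 S2) (allocations T) (τ1, T - τ1)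
  have hτ1 : τ1 = if a2 = 0 then T else if T ≤ threshold a1 a2 S1 S2 then T
      else balancedAllocation a1 a2 S1 S2 T := rfl
  clear_value τ1
  split_ifs at hτ1 with h2 hle <;> subst hτ1
  · rw [sub_self]
    refine isUniqueMinOn_corner hS1 hS2 hT.le ha1.ne' ?_
    rw [h2, marginalReduction, zero_mul, zero_div, sq, zero_mul]
    exact sq_nonneg _
  · rw [sub_self]
    exact isUniqueMinOn_corner hS1 hS2 hT.le ha1.ne' <|
      marginalReduction_zero_le_of_le_threshold (ha2.lt_of_ne' h2) hS1 hS2 hT.le hle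
  · have ha2' : 0 < a2 := ha2.lt_of_ne' h2
    have hs := balancedAllocation_mem_Icc ha1 ha2' hS1 hS2 hsort (not_le.1 hle)
    exact isUniqueMinOn_interior hS1 hS2 ha1.ne' h2 hs.1 hs.2 <|
      marginalReduction_balancedAllocation ha1 ha2' hS1 hS2 hs

/-- Single-player case with K = 2 (Theorem 1 of the paper).
`S1, S2` are the prior variances `Σ⁰₁, Σ⁰₂`; `a1, a2` are the weights `α₁, α₂`.
The unique minimizer of `σ̂²` over the set of test allocations `𝒯` is given
explicitly. -/
theorem stmt_0
    (S1 S2 T a1 a2 : ℝ)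
    (hS1 : 0 < S1) (hS2 : 0 < S2) (hT : 0 < T)
    (ha1 : 0 ≤ a1) (ha2 : 0 ≤ a2)
    (hne : ¬ (a1 = 0 ∧ a2 = 0))
    (hsort : a2 * S2 ≤ a1 * S1) :
    let 𝒯 : Set (ℝ × ℝ) := {τ | 0 ≤ τ.1 ∧ 0 ≤ τ.2 ∧ τ.1 + τ.2 ≤ T}
    let σhat2 : ℝ × ℝ → ℝ := fun τ =>
      a1 ^ 2 * (S1 / (1 + τ.1 * S1)) + a2 ^ 2 * (S2 / (1 + τ.2 * S2))
    let Tbar : ℝ := a1 / (a2 * S2) - 1 / S1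
    let τ1 : ℝ :=
      if a2 = 0 then T
      else if T ≤ Tbar then T else Tbar + (a1 / (a1 + a2)) * (T - Tbar)
    let τstar : ℝ × ℝ := (τ1, T - τ1)
    τstar ∈ 𝒯 ∧ (∀ τ ∈ 𝒯, σhat2 τstar ≤ σhat2 τ) ∧
      (∀ τ ∈ 𝒯, σhat2 τ = σhat2 τstar → τ = τstar) :=
  stmt_0_general S1 S2 T a1 a2 hS1 hS2 hT ha2 hne hsort
end

section
/- Fix K ≥ 1 attributes with prior variances Σ⁰_k > 0, a budget T > 0, decision-maker weights α^D_k ≥ 0 and researcher weights α^R_k ≥ 0. Set λ_k := 2α^R_k α^D_k − (α^D_k)² and auxiliary weights α̂_k := √(max{λ_k, 0}). Then a test allocation τ ∈ 𝒯 maximizes the researcher's reduced objective G(τ) := −Σ_k λ_k Σ̂_k(τ_k) over 𝒯 if and only if τ minimizes the auxiliary single-player objective Σ_k α̂_k² Σ̂_k(τ_k) over 𝒯 and τ_k = 0 for every k with λ_k < 0. -/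
/-!
Split `λ_k = α̂_k² + min(λ_k, 0)`. Then `G + H = ∑ₖ (−min(λ_k, 0)) Σ̂_k(τ_k)`, a sum with nonnegative
weights of posterior variances, each at most its prior `Σ⁰_k`, with equality exactly when `τ_k = 0`.
So `G ≤ c − H` for the constant `c = ∑ₖ (−min(λ_k, 0)) Σ⁰_k`, with equality exactly when `τ`
vanishes on `{λ_k < 0}`. Removing the tests on those attributes keeps `τ` feasible and does not
change `H`, since `α̂_k = 0` there; hence maximizing `G` is minimizing `H` on allocations of
that kind.
-/

noncomputable section

open Finset

theorem isMaxOn_iff_isMinOn_and_of_add_le {α : Type*} {s : Set α} {f g : α → ℝ} {P : α → Prop}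
    {c : ℝ} (hle : ∀ x ∈ s, f x + g x ≤ c) (heq : ∀ x ∈ s, f x + g x = c ↔ P x)
    (hex : ∀ x ∈ s, ∃ y ∈ s, P y ∧ g y = g x) {a : α} (ha : a ∈ s) :
    IsMaxOn f s a ↔ IsMinOn g s a ∧ P a := by
  simp only [isMaxOn_iff, isMinOn_iff]
  constructor
  · intro hmax
    have hPa : P a := by
      obtain ⟨y, hy, hPy, hgy⟩ := hex a ha
      have hfy := (heq y hy).2 hPy
      have hya := hmax y hy
      exact (heq a ha).1 (le_antisymm (hle a ha) (by linarith))
    refine ⟨fun x hx => ?_, hPa⟩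
    obtain ⟨y, hy, hPy, hgy⟩ := hex x hx
    have hfy := (heq y hy).2 hPy
    have hfa := (heq a ha).2 hPa
    have hya := hmax y hy
    linarith
  · rintro ⟨hmin, hPa⟩ x hx
    have hfa := (heq a ha).2 hPa
    have hx_le := hle x hx
    have hax := hmin x hx
    linarith

/-- The paper's `Σ̂_k(τ_k)`, for prior variance `s0 = Σ⁰_k` and `t = τ_k` tests. -/
def posteriorVar (s0 t : ℝ) : ℝ := s0 / (1 + t * s0)

section PosteriorVar

variable {s0 t : ℝ}

theorem posteriorVar_le (hs : 0 < s0) (ht : 0 ≤ t) : posteriorVar s0 t ≤ s0 := by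
  unfold posteriorVar
  rw [div_le_iff₀ (by positivity)]
  nlinarith [mul_nonneg ht hs.le]

theorem posteriorVar_eq_iff (hs : 0 < s0) (ht : 0 ≤ t) : posteriorVar s0 t = s0 ↔ t = 0 := by
  unfold posteriorVar
  rw [div_eq_iff (by positivity)]
  constructor
  · intro h
    have : t * s0 * s0 = 0 := by linarith
    simpa [hs.ne'] using this
  · rintro rfl
    ring

end PosteriorVar

section Allocation

variable {ι : Type*} [Fintype ι] {S0 : ι → ℝ} {τ : ι → ℝ}

theorem sum_mul_posteriorVar_le {w : ι → ℝ} (hw : ∀ k, 0 ≤ w k) (hS : ∀ k, 0 < S0 k)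
    (hτ : ∀ k, 0 ≤ τ k) : ∑ k, w k * posteriorVar (S0 k) (τ k) ≤ ∑ k, w k * S0 k :=
  sum_le_sum fun k _ => mul_le_mul_of_nonneg_left (posteriorVar_le (hS k) (hτ k)) (hw k)

theorem sum_mul_posteriorVar_eq_iff {w : ι → ℝ} (hw : ∀ k, 0 ≤ w k) (hS : ∀ k, 0 < S0 k)
    (hτ : ∀ k, 0 ≤ τ k) :
    ∑ k, w k * posteriorVar (S0 k) (τ k) = ∑ k, w k * S0 k ↔ ∀ k, 0 < w k → τ k = 0 := by
  rw [sum_eq_sum_iff_of_le fun k _ =>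
    mul_le_mul_of_nonneg_left (posteriorVar_le (hS k) (hτ k)) (hw k)]
  simp only [mem_univ, true_implies, mul_eq_mul_left_iff, posteriorVar_eq_iff (hS _) (hτ _)]
  refine forall_congr' fun k => ⟨fun h hk => h.resolve_right hk.ne', fun h => ?_⟩
  rcases (hw k).lt_or_eq with hk | hk
  · exact Or.inl (h hk)
  · exact Or.inr hk.symm

def testAllocations (T : ℝ) : Set (ι → ℝ) := {τ | (∀ k, 0 ≤ τ k) ∧ ∑ k, τ k ≤ T}

theorem indicator_mem_testAllocations {T : ℝ} (hτ : τ ∈ testAllocations T) (A : Set ι) :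
    A.indicator τ ∈ testAllocations T :=
  ⟨Set.indicator_nonneg fun k _ => hτ.1 k,
    (sum_le_sum fun k _ => Set.indicator_le_self' (fun j _ => hτ.1 j) k).trans hτ.2⟩

variable (S0) (lam : ι → ℝ)

def reducedObjective (τ : ι → ℝ) : ℝ := -∑ k, lam k * posteriorVar (S0 k) (τ k)

def auxObjective (τ : ι → ℝ) : ℝ := ∑ k, √(max (lam k) 0) ^ 2 * posteriorVar (S0 k) (τ k)

theorem reducedObjective_add_auxObjective (τ : ι → ℝ) :
    reducedObjective S0 lam τ + auxObjective S0 lam τ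
      = ∑ k, -min (lam k) 0 * posteriorVar (S0 k) (τ k) := by
  unfold reducedObjective auxObjective
  rw [neg_add_eq_sub, ← sum_sub_distrib]
  refine sum_congr rfl fun k _ => ?_
  rw [Real.sq_sqrt (le_max_right _ _), ← sub_mul]
  congr 1
  linarith [max_add_min (lam k) 0]

theorem auxObjective_indicator_nonneg (τ : ι → ℝ) :
    auxObjective S0 lam ({k | 0 ≤ lam k}.indicator τ) = auxObjective S0 lam τ := by
  refine sum_congr rfl fun k _ => ?_
  by_cases hk : 0 ≤ lam k
  · rw [Set.indicator_of_mem (by exact hk)]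
  · rw [max_eq_right (not_le.1 hk).le, Real.sqrt_zero]
    ring

theorem isMaxOn_reducedObjective_iff (hS : ∀ k, 0 < S0 k) {T : ℝ}
    (hτ : τ ∈ testAllocations T) :
    IsMaxOn (reducedObjective S0 lam) (testAllocations T) τ ↔
      IsMinOn (auxObjective S0 lam) (testAllocations T) τ ∧ ∀ k, lam k < 0 → τ k = 0 := by
  have hw : ∀ k, 0 ≤ -min (lam k) 0 := fun k => neg_nonneg.2 (min_le_right _ _)
  refine isMaxOn_iff_isMinOn_and_of_add_le (P := fun σ => ∀ k, lam k < 0 → σ k = 0)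
    (c := ∑ k, -min (lam k) 0 * S0 k)
    (fun σ hσ => ?_) (fun σ hσ => ?_) (fun σ hσ => ?_) hτ
  · rw [reducedObjective_add_auxObjective]
    exact sum_mul_posteriorVar_le hw hS hσ.1
  · rw [reducedObjective_add_auxObjective, sum_mul_posteriorVar_eq_iff hw hS hσ.1]
    simp only [neg_pos, min_lt_iff, lt_irrefl, or_false]
  · exact ⟨_, indicator_mem_testAllocations hσ _,
      fun k hk => Set.indicator_of_notMem (s := {k | 0 ≤ lam k}) (not_le.2 hk) σ,
      auxObjective_indicator_nonneg S0 lam σ⟩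

end Allocation

theorem stmt_2_general
    (K : ℕ)
    (S0 aD aR : Fin K → ℝ) (T : ℝ)
    (hS : ∀ k, 0 < S0 k) :
    let 𝒯 : Set (Fin K → ℝ) := {τ | (∀ k, 0 ≤ τ k) ∧ ∑ k, τ k ≤ T}
    let Shat : (Fin K → ℝ) → Fin K → ℝ := fun τ k => S0 k / (1 + τ k * S0 k)
    let lam : Fin K → ℝ := fun k => 2 * aR k * aD k - (aD k) ^ 2
    let ahat : Fin K → ℝ := fun k => Real.sqrt (max (lam k) 0)
    let G : (Fin K → ℝ) → ℝ := fun τ => -∑ k, lam k * Shat τ k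
    let H : (Fin K → ℝ) → ℝ := fun τ => ∑ k, (ahat k) ^ 2 * Shat τ k
    ∀ τ ∈ 𝒯,
      ((∀ τ' ∈ 𝒯, G τ' ≤ G τ) ↔
        ((∀ τ' ∈ 𝒯, H τ ≤ H τ') ∧ ∀ k, lam k < 0 → τ k = 0)) := by
  intro 𝒯 Shat lam ahat G H τ hτ
  have h := isMaxOn_reducedObjective_iff S0 lam hS hτ
  rw [isMaxOn_iff, isMinOn_iff] at h
  exact h

/-- Theorem 2 of the paper (equilibrium test allocation via auxiliary
weights).  `S0 k` are the prior variances, `aD k` the decision-maker's weights,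
`aR k` the researcher's weights, `lam k = 2 α^R_k α^D_k − (α^D_k)²`, and
`ahat k = √(max{λ_k, 0})` the auxiliary weights.  A test allocation `τ ∈ 𝒯`
maximizes the researcher's reduced objective `G` over `𝒯` iff it minimizes the
auxiliary single-player objective over `𝒯` and puts no tests on attributes with
`λ_k < 0`. -/
theorem stmt_2
    (K : ℕ) (hK : 1 ≤ K)
    (S0 aD aR : Fin K → ℝ) (T : ℝ)
    (hS : ∀ k, 0 < S0 k) (haD : ∀ k, 0 ≤ aD k) (haR : ∀ k, 0 ≤ aR k)
    (hT : 0 < T) :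
    let 𝒯 : Set (Fin K → ℝ) := {τ | (∀ k, 0 ≤ τ k) ∧ ∑ k, τ k ≤ T}
    let Shat : (Fin K → ℝ) → Fin K → ℝ := fun τ k => S0 k / (1 + τ k * S0 k)
    let lam : Fin K → ℝ := fun k => 2 * aR k * aD k - (aD k) ^ 2
    let ahat : Fin K → ℝ := fun k => Real.sqrt (max (lam k) 0)
    let G : (Fin K → ℝ) → ℝ := fun τ => -∑ k, lam k * Shat τ k
    let H : (Fin K → ℝ) → ℝ := fun τ => ∑ k, (ahat k) ^ 2 * Shat τ k
    ∀ τ ∈ 𝒯,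
      ((∀ τ' ∈ 𝒯, G τ' ≤ G τ) ↔
        ((∀ τ' ∈ 𝒯, H τ ≤ H τ') ∧ ∀ k, lam k < 0 → τ k = 0)) :=
  stmt_2_general K S0 aD aR T hS
end
end

section
/- In the organization setting, suppose α^D₁ ≥ α^D₂ > 0 and fix β ∈ [0, 1/2]. Define γ₁(β) := −(1/2 − β)·α^D₁/α^D₂ and γ₂(β) := (1/2 − β)·α^D₂/α^D₁, so γ₁(β) ≤ 0 ≤ γ₂(β). Then for every γ ∈ Γ(β) the analyst's equilibrium test allocation satisfies: τ*(β,γ) = (0, T) if γ > γ₂(β); τ*(β,γ) = (0, 0) if γ₁(β) ≤ γ ≤ γ₂(β); and τ*(β,γ) = (T, 0) if γ < γ₁(β). Moreover, with β₁ := (α^D₁)²/(2((α^D₁)² + (α^D₂)²)) and β₂ := (α^D₂)²/(2((α^D₁)² + (α^D₂)²)), one has 0 < β₂ ≤ β₁ < 1/2, γ₁(β) lies in the interior of Γ(β) if and only if β ∈ (β₁, 1/2], and γ₂(β) lies in the interior of Γ(β) if and only if β ∈ (β₂, 1/2]. -/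
noncomputable section

/-! Organization setting (Section 5.1 of the paper), K = 2.

* `Talloc T` is the set `𝒯` of test allocations with budget `T`.
* `Gam aD1 aD2 β` is the set `Γ(β)` of feasible distortions.
* `lam1, lam2` are the parameters `λ₁(β,γ), λ₂(β,γ)` induced by the analyst's
  weights `α^R(β,γ) = (β α^D₁ − γ α^D₂, β α^D₂ + γ α^D₁)`.
* `Gfun` is the researcher's reduced objective `G_{β,γ}`.
* `IsEqAlloc … τ` says that `τ` is the analyst's equilibrium test allocation:
  `τ = (0,0)` if `λ₁ ≤ 0` and `λ₂ ≤ 0`, and otherwise `τ` is a maximizer of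
  `G_{β,γ}` over `𝒯` (which is in fact unique).
* `VD` is the manager's interim expected equilibrium payoff. -/

/-- The set of test allocations with budget `T`. -/
def Talloc (T : ℝ) : Set (ℝ × ℝ) := {τ | 0 ≤ τ.1 ∧ 0 ≤ τ.2 ∧ τ.1 + τ.2 ≤ T}

/-- The set `Γ(β)` of feasible distortions. -/
def Gam (aD1 aD2 β : ℝ) : Set ℝ := Set.Icc (-(β * aD2 / aD1)) (β * aD1 / aD2)

/-- `λ₁(β,γ)`. -/
def lam1 (aD1 aD2 β γ : ℝ) : ℝ := (2 * β - 1) * aD1 ^ 2 - 2 * γ * aD1 * aD2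

/-- `λ₂(β,γ)`. -/
def lam2 (aD1 aD2 β γ : ℝ) : ℝ := (2 * β - 1) * aD2 ^ 2 + 2 * γ * aD1 * aD2

/-- The researcher's reduced objective `G_{β,γ}(τ) = −λ₁ Σ̂₁(τ₁) − λ₂ Σ̂₂(τ₂)`. -/
def Gfun (S1 S2 aD1 aD2 β γ : ℝ) (τ : ℝ × ℝ) : ℝ :=
  -(lam1 aD1 aD2 β γ) * (S1 / (1 + τ.1 * S1)) - lam2 aD1 aD2 β γ * (S2 / (1 + τ.2 * S2))

/-- `τ` is the analyst's equilibrium test allocation `τ*(β,γ)`. -/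
def IsEqAlloc (S1 S2 T aD1 aD2 β γ : ℝ) (τ : ℝ × ℝ) : Prop :=
  (lam1 aD1 aD2 β γ ≤ 0 ∧ lam2 aD1 aD2 β γ ≤ 0 ∧ τ = (0, 0)) ∨
  (¬(lam1 aD1 aD2 β γ ≤ 0 ∧ lam2 aD1 aD2 β γ ≤ 0) ∧ τ ∈ Talloc T ∧
    ∀ τ' ∈ Talloc T, Gfun S1 S2 aD1 aD2 β γ τ' ≤ Gfun S1 S2 aD1 aD2 β γ τ)

/-- The manager's interim expected equilibrium payoff `V^D`. -/
def VD (S1 S2 aD1 aD2 : ℝ) (τ : ℝ × ℝ) : ℝ :=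
  -(aD1 ^ 2) * (S1 / (1 + τ.1 * S1)) - aD2 ^ 2 * (S2 / (1 + τ.2 * S2))

/-! The posterior variance `S / (1 + x S)` strictly decreases in the test time `x`. Hence, when
`λ₁` and `λ₂` have opposite signs, `G` has a unique maximiser on `𝒯`: the whole budget goes to the
dimension with `λₖ > 0`. With `c = 2 α^D₁ α^D₂ > 0` one has `λ₁ = c (γ₁ - γ)` and
`λ₂ = c (γ - γ₂)`, so the regimes of `γ` relative to `γ₁ ≤ 0 ≤ γ₂` are exactly the sign patterns
of `(λ₁, λ₂)`. The interior conditions reduce to `(1/2 - β) (α^D₁)² < β (α^D₂)²` and its mirror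
image. -/

lemma strictAntiOn_div_one_add_mul {S : ℝ} (hS : 0 < S) :
    StrictAntiOn (fun x : ℝ => S / (1 + x * S)) (Set.Ici 0) := by
  intro x hx y _ hxy
  exact div_lt_div_of_pos_left hS (by nlinarith [Set.mem_Ici.mp hx])
    (by nlinarith)

lemma corner_strict_max {S1 S2 T a b x y : ℝ} (hS1 : 0 < S1) (hS2 : 0 < S2)
    (ha : 0 < a) (hb : 0 < b) (hx : 0 ≤ x) (hy : 0 ≤ y) (hxy : x + y ≤ T)
    (hne : (x, y) ≠ (0, T)) :
    a * (S1 / (1 + x * S1)) - b * (S2 / (1 + y * S2)) <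
      a * (S1 / (1 + 0 * S1)) - b * (S2 / (1 + T * S2)) := by
  have f1 := strictAntiOn_div_one_add_mul hS1
  have f2 := strictAntiOn_div_one_add_mul hS2
  have hyT : y ≤ T := by linarith
  have hT : (0 : ℝ) ≤ T := hy.trans hyT
  have le1 : S1 / (1 + x * S1) ≤ S1 / (1 + 0 * S1) :=
    f1.antitoneOn (le_refl (0 : ℝ)) hx hx
  have le2 : S2 / (1 + T * S2) ≤ S2 / (1 + y * S2) := f2.antitoneOn hy hT hyT
  rcases hx.eq_or_lt with rfl | hx0
  · have hyT' : y < T := hyT.lt_of_ne fun h => hne (by rw [h])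
    have lt2 : S2 / (1 + T * S2) < S2 / (1 + y * S2) := f2 hy hT hyT'
    nlinarith
  · have lt1 : S1 / (1 + x * S1) < S1 / (1 + 0 * S1) := f1 (le_refl (0 : ℝ)) hx hx0
    nlinarith

section Equilibrium

variable {S1 S2 T aD1 aD2 β γ : ℝ}

lemma isEqAlloc_unique_of_strict_max {τ₀ : ℝ × ℝ}
    (hlam : ¬(lam1 aD1 aD2 β γ ≤ 0 ∧ lam2 aD1 aD2 β γ ≤ 0)) (hτ₀ : τ₀ ∈ Talloc T)
    (hmax : ∀ τ ∈ Talloc T, τ ≠ τ₀ → Gfun S1 S2 aD1 aD2 β γ τ < Gfun S1 S2 aD1 aD2 β γ τ₀) :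
    IsEqAlloc S1 S2 T aD1 aD2 β γ τ₀ ∧ ∀ τ, IsEqAlloc S1 S2 T aD1 aD2 β γ τ → τ = τ₀ := by
  refine ⟨Or.inr ⟨hlam, hτ₀, fun τ hτ => ?_⟩, ?_⟩
  · rcases eq_or_ne τ τ₀ with rfl | hne
    · exact le_rfl
    · exact (hmax τ hτ hne).le
  · rintro τ (⟨h1, h2, -⟩ | ⟨-, hτ, hτmax⟩)
    · exact absurd ⟨h1, h2⟩ hlam
    · by_contra hne
      exact (hmax τ hτ hne).not_ge (hτmax τ₀ hτ₀)

lemma isEqAlloc_zero_T (hS1 : 0 < S1) (hS2 : 0 < S2) (hT : 0 < T)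
    (hl1 : lam1 aD1 aD2 β γ < 0) (hl2 : 0 < lam2 aD1 aD2 β γ) :
    IsEqAlloc S1 S2 T aD1 aD2 β γ (0, T) ∧
      ∀ τ, IsEqAlloc S1 S2 T aD1 aD2 β γ τ → τ = (0, T) := by
  refine isEqAlloc_unique_of_strict_max (fun h => h.2.not_gt hl2)
    ⟨le_rfl, hT.le, by simp⟩ fun ⟨x, y⟩ ⟨hx, hy, hxy⟩ hne => ?_
  exact corner_strict_max hS1 hS2 (neg_pos.mpr hl1) hl2 hx hy hxy hne

lemma isEqAlloc_T_zero (hS1 : 0 < S1) (hS2 : 0 < S2) (hT : 0 < T)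
    (hl1 : 0 < lam1 aD1 aD2 β γ) (hl2 : lam2 aD1 aD2 β γ < 0) :
    IsEqAlloc S1 S2 T aD1 aD2 β γ (T, 0) ∧
      ∀ τ, IsEqAlloc S1 S2 T aD1 aD2 β γ τ → τ = (T, 0) := by
  refine isEqAlloc_unique_of_strict_max (fun h => h.1.not_gt hl1)
    ⟨hT.le, le_rfl, by simp⟩ fun ⟨x, y⟩ ⟨hx, hy, hxy⟩ hne => ?_
  have := corner_strict_max (x := y) (y := x) hS2 hS1 (neg_pos.mpr hl2) hl1 hy hx
    ((add_comm y x).trans_le hxy) fun h => hne (by rw [Prod.mk.injEq] at h ⊢; exact h.symm)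
  simp only [Gfun]
  linarith

lemma isEqAlloc_zero_zero (hl1 : lam1 aD1 aD2 β γ ≤ 0) (hl2 : lam2 aD1 aD2 β γ ≤ 0) :
    IsEqAlloc S1 S2 T aD1 aD2 β γ (0, 0) ∧
      ∀ τ, IsEqAlloc S1 S2 T aD1 aD2 β γ τ → τ = (0, 0) := by
  refine ⟨Or.inl ⟨hl1, hl2, rfl⟩, ?_⟩
  rintro τ (⟨-, -, rfl⟩ | ⟨hlam, -⟩)
  · rfl
  · exact absurd ⟨hl1, hl2⟩ hlam

end Equilibrium

section Thresholds

variable {aD1 aD2 β γ : ℝ}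

lemma lam1_eq (ha2 : aD2 ≠ 0) :
    lam1 aD1 aD2 β γ = -(2 * aD1 * aD2 * (γ + (1 / 2 - β) * aD1 / aD2)) := by
  unfold lam1
  field_simp
  ring

lemma lam2_eq (ha1 : aD1 ≠ 0) :
    lam2 aD1 aD2 β γ = -(2 * aD1 * aD2 * ((1 / 2 - β) * aD2 / aD1 - γ)) := by
  unfold lam2
  field_simp
  ring

lemma lam1_nonpos_iff (ha1 : 0 < aD1) (ha2 : 0 < aD2) :
    lam1 aD1 aD2 β γ ≤ 0 ↔ -((1 / 2 - β) * aD1 / aD2) ≤ γ := by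
  rw [lam1_eq ha2.ne', neg_nonpos, mul_nonneg_iff_of_pos_left (by positivity)]
  constructor <;> intro <;> linarith

lemma lam1_neg_iff (ha1 : 0 < aD1) (ha2 : 0 < aD2) :
    lam1 aD1 aD2 β γ < 0 ↔ -((1 / 2 - β) * aD1 / aD2) < γ := by
  rw [lam1_eq ha2.ne', neg_neg_iff_pos, mul_pos_iff_of_pos_left (by positivity)]
  constructor <;> intro <;> linarith

lemma lam2_nonpos_iff (ha1 : 0 < aD1) (ha2 : 0 < aD2) :
    lam2 aD1 aD2 β γ ≤ 0 ↔ γ ≤ (1 / 2 - β) * aD2 / aD1 := by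
  rw [lam2_eq ha1.ne', neg_nonpos, mul_nonneg_iff_of_pos_left (by positivity), sub_nonneg]

lemma lam2_neg_iff (ha1 : 0 < aD1) (ha2 : 0 < aD2) :
    lam2 aD1 aD2 β γ < 0 ↔ γ < (1 / 2 - β) * aD2 / aD1 := by
  rw [lam2_eq ha1.ne', neg_neg_iff_pos, mul_pos_iff_of_pos_left (by positivity), sub_pos]

lemma lam1_pos_iff (ha1 : 0 < aD1) (ha2 : 0 < aD2) :
    0 < lam1 aD1 aD2 β γ ↔ γ < -((1 / 2 - β) * aD1 / aD2) := by
  rw [← not_le, lam1_nonpos_iff ha1 ha2, not_le]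

lemma lam2_pos_iff (ha1 : 0 < aD1) (ha2 : 0 < aD2) :
    0 < lam2 aD1 aD2 β γ ↔ (1 / 2 - β) * aD2 / aD1 < γ := by
  rw [← not_le, lam2_nonpos_iff ha1 ha2, not_le]

lemma half_sub_mul_div_lt_mul_div_iff {a b : ℝ} (ha : 0 < a) (hb : 0 < b) :
    (1 / 2 - β) * a / b < β * b / a ↔ a ^ 2 / (2 * (a ^ 2 + b ^ 2)) < β := by
  rw [div_lt_div_iff₀ hb ha, div_lt_iff₀ (by positivity)]
  constructor <;> intro <;> nlinarith

lemma neg_half_sub_mem_interior_Gam_iff (ha1 : 0 < aD1) (ha2 : 0 < aD2) (hβ : β ≤ 1 / 2) :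
    -((1 / 2 - β) * aD1 / aD2) ∈ interior (Gam aD1 aD2 β) ↔
      β ∈ Set.Ioc (aD1 ^ 2 / (2 * (aD1 ^ 2 + aD2 ^ 2))) (1 / 2) := by
  have hupper : -((1 / 2 - β) * aD1 / aD2) < β * aD1 / aD2 := by
    rw [neg_lt_iff_pos_add, ← add_div]
    exact div_pos (by nlinarith) ha2
  rw [Gam, interior_Icc, Set.mem_Ioo, Set.mem_Ioc, neg_lt_neg_iff,
    half_sub_mul_div_lt_mul_div_iff ha1 ha2]
  tauto

lemma half_sub_mem_interior_Gam_iff (ha1 : 0 < aD1) (ha2 : 0 < aD2) (hβ : β ≤ 1 / 2) :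
    (1 / 2 - β) * aD2 / aD1 ∈ interior (Gam aD1 aD2 β) ↔
      β ∈ Set.Ioc (aD2 ^ 2 / (2 * (aD1 ^ 2 + aD2 ^ 2))) (1 / 2) := by
  have hlower : -(β * aD2 / aD1) < (1 / 2 - β) * aD2 / aD1 := by
    rw [neg_lt_iff_pos_add, ← add_div]
    exact div_pos (by nlinarith) ha1
  rw [Gam, interior_Icc, Set.mem_Ioo, Set.mem_Ioc, half_sub_mul_div_lt_mul_div_iff ha2 ha1,
    add_comm (aD2 ^ 2)]
  tauto

end Thresholds

/-- Characterization of the equilibrium test allocation for an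
insensitive analyst (`β ≤ 1/2`), Lemma 3 of the paper. -/
theorem stmt_4
    (S1 S2 T aD1 aD2 β : ℝ)
    (hS1 : 0 < S1) (hS2 : 0 < S2) (hT : 0 < T)
    (hD : aD2 ≤ aD1) (hD2 : 0 < aD2)
    (hβ : β ∈ Set.Icc (0 : ℝ) (1 / 2)) :
    let γ1 : ℝ := -((1 / 2 - β) * aD1 / aD2)
    let γ2 : ℝ := (1 / 2 - β) * aD2 / aD1
    let β1 : ℝ := aD1 ^ 2 / (2 * (aD1 ^ 2 + aD2 ^ 2))
    let β2 : ℝ := aD2 ^ 2 / (2 * (aD1 ^ 2 + aD2 ^ 2))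
    (γ1 ≤ 0 ∧ 0 ≤ γ2) ∧
    (∀ γ ∈ Gam aD1 aD2 β,
      (γ2 < γ → IsEqAlloc S1 S2 T aD1 aD2 β γ (0, T) ∧
        ∀ τ, IsEqAlloc S1 S2 T aD1 aD2 β γ τ → τ = (0, T)) ∧
      (γ1 ≤ γ → γ ≤ γ2 → IsEqAlloc S1 S2 T aD1 aD2 β γ (0, 0) ∧
        ∀ τ, IsEqAlloc S1 S2 T aD1 aD2 β γ τ → τ = (0, 0)) ∧
      (γ < γ1 → IsEqAlloc S1 S2 T aD1 aD2 β γ (T, 0) ∧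
        ∀ τ, IsEqAlloc S1 S2 T aD1 aD2 β γ τ → τ = (T, 0))) ∧
    (0 < β2 ∧ β2 ≤ β1 ∧ β1 < 1 / 2) ∧
    (γ1 ∈ interior (Gam aD1 aD2 β) ↔ β ∈ Set.Ioc β1 (1 / 2)) ∧
    (γ2 ∈ interior (Gam aD1 aD2 β) ↔ β ∈ Set.Ioc β2 (1 / 2)) := by
  intro γ1 γ2 β1 β2
  have ha1 : 0 < aD1 := hD2.trans_le hD
  have hβ' : 0 ≤ 1 / 2 - β := sub_nonneg.mpr hβ.2
  have hγ1 : γ1 ≤ 0 := neg_nonpos.mpr (div_nonneg (mul_nonneg hβ' ha1.le) hD2.le)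
  have hγ2 : 0 ≤ γ2 := div_nonneg (mul_nonneg hβ' hD2.le) ha1.le
  refine ⟨⟨hγ1, hγ2⟩, fun γ _ => ⟨fun h => ?_, fun h1 h2 => ?_, fun h => ?_⟩, ⟨?_, ?_, ?_⟩,
    neg_half_sub_mem_interior_Gam_iff ha1 hD2 hβ.2, half_sub_mem_interior_Gam_iff ha1 hD2 hβ.2⟩
  · exact isEqAlloc_zero_T hS1 hS2 hT ((lam1_neg_iff ha1 hD2).mpr (by linarith))
      ((lam2_pos_iff ha1 hD2).mpr h)
  · exact isEqAlloc_zero_zero ((lam1_nonpos_iff ha1 hD2).mpr h1) ((lam2_nonpos_iff ha1 hD2).mpr h2)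
  · exact isEqAlloc_T_zero hS1 hS2 hT ((lam1_pos_iff ha1 hD2).mpr h)
      ((lam2_neg_iff ha1 hD2).mpr (by linarith))
  · positivity
  · exact div_le_div_of_nonneg_right (by gcongr) (by positivity)
  · rw [div_lt_iff₀ (by positivity)]
    nlinarith
end
end

section
/- In the organization setting with α^D₁ ≥ α^D₂ > 0, fix a sensitivity level β ∈ [0, 1/2]. Then the manager's expected equilibrium payoff weakly increases as the analyst becomes more distorted: for any γ, γ' ∈ Γ(β) with either 0 ≤ γ ≤ γ' or γ' ≤ γ ≤ 0, one has V^D(τ*(β, γ')) ≥ V^D(τ*(β, γ)). -/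
noncomputable section

/-!
For `β ≤ 1/2` and `γ ≥ 0` the analyst puts a nonpositive weight `λ₁` on the first
variance, so in equilibrium he either runs no test or spends the whole budget on the
second characteristic, the latter exactly when `λ₂ > 0`. Since `λ₂` increases with `γ`,
more distortion can only switch the analyst from no test to testing characteristic 2,
which lowers the variance the manager cares about. The case `γ ≤ 0` is the mirror image
under exchanging the two characteristics, which maps `γ` to `-γ`.
-/

lemma postVar_strictAntiOn {S : ℝ} (hS : 0 < S) :
    StrictAntiOn (fun t : ℝ => S / (1 + t * S)) (Set.Ici 0) := by
  intro s (hs : 0 ≤ s) t _ hst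
  exact div_lt_div_of_pos_left hS (by positivity) (by gcongr)

lemma postVar_le {S t : ℝ} (hS : 0 < S) (ht : 0 ≤ t) : S / (1 + t * S) ≤ S := by
  simpa using (postVar_strictAntiOn hS).antitoneOn (le_refl (0 : ℝ)) ht ht

section Swap

variable {S1 S2 T aD1 aD2 β γ : ℝ} {τ : ℝ × ℝ}

lemma lam1_swap : lam1 aD2 aD1 β (-γ) = lam2 aD1 aD2 β γ := by
  unfold lam1 lam2; ring

lemma lam2_swap : lam2 aD2 aD1 β (-γ) = lam1 aD1 aD2 β γ := by
  unfold lam1 lam2; ring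

lemma swap_mem_Talloc (hτ : τ ∈ Talloc T) : τ.swap ∈ Talloc T := by
  obtain ⟨h1, h2, hsum⟩ := hτ
  exact ⟨h2, h1, by simp only [Prod.fst_swap, Prod.snd_swap]; linarith⟩

lemma Gfun_swap : Gfun S2 S1 aD2 aD1 β (-γ) τ.swap = Gfun S1 S2 aD1 aD2 β γ τ := by
  simp only [Gfun, lam1_swap, lam2_swap, Prod.fst_swap, Prod.snd_swap]; ring

lemma VD_swap : VD S2 S1 aD2 aD1 τ.swap = VD S1 S2 aD1 aD2 τ := by
  simp only [VD, Prod.fst_swap, Prod.snd_swap]; ring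

lemma IsEqAlloc.swap (h : IsEqAlloc S1 S2 T aD1 aD2 β γ τ) :
    IsEqAlloc S2 S1 T aD2 aD1 β (-γ) τ.swap := by
  rw [IsEqAlloc, lam1_swap, lam2_swap]
  rcases h with ⟨hl1, hl2, rfl⟩ | ⟨hl, hτ, hmax⟩
  · exact Or.inl ⟨hl2, hl1, rfl⟩
  · refine Or.inr ⟨fun h => hl ⟨h.2, h.1⟩, swap_mem_Talloc hτ, fun τ' hτ' => ?_⟩
    rw [← Prod.swap_swap τ', Gfun_swap, Gfun_swap]
    exact hmax _ (swap_mem_Talloc hτ')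

end Swap

section NonpositiveFirstWeight

variable {S1 S2 T aD1 aD2 β γ : ℝ} {τ : ℝ × ℝ}

lemma eq_zero_budget_of_maximizer (hS1 : 0 < S1) (hS2 : 0 < S2) (hT : 0 < T)
    (hl1 : lam1 aD1 aD2 β γ ≤ 0) (hl2 : 0 < lam2 aD1 aD2 β γ) (hτ : τ ∈ Talloc T)
    (hmax : ∀ τ' ∈ Talloc T, Gfun S1 S2 aD1 aD2 β γ τ' ≤ Gfun S1 S2 aD1 aD2 β γ τ) :
    τ = (0, T) := by
  obtain ⟨h1, h2, hsum⟩ := hτ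
  suffices hT2 : T ≤ τ.2 from Prod.ext (by simp only; linarith) (by simp only; linarith)
  by_contra! hlt
  have hv1 := postVar_le hS1 h1
  have hv2 : S2 / (1 + T * S2) < S2 / (1 + τ.2 * S2) :=
    postVar_strictAntiOn hS2 h2 (h2.trans hlt.le) hlt
  have hG := hmax (0, T) ⟨le_rfl, hT.le, by simp⟩
  simp only [Gfun, zero_mul, add_zero, div_one] at hG
  nlinarith [mul_nonneg (neg_nonneg.2 hl1) (sub_nonneg.2 hv1), mul_pos hl2 (sub_pos.2 hv2)]

lemma IsEqAlloc.eq_of_lam1_nonpos (hS1 : 0 < S1) (hS2 : 0 < S2) (hT : 0 < T)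
    (hl1 : lam1 aD1 aD2 β γ ≤ 0) (h : IsEqAlloc S1 S2 T aD1 aD2 β γ τ) :
    (lam2 aD1 aD2 β γ ≤ 0 ∧ τ = (0, 0)) ∨ (0 < lam2 aD1 aD2 β γ ∧ τ = (0, T)) := by
  rcases h with ⟨-, hl2, rfl⟩ | ⟨hl, hτ, hmax⟩
  · exact Or.inl ⟨hl2, rfl⟩
  · have hl2 : 0 < lam2 aD1 aD2 β γ := not_le.1 fun hl2 => hl ⟨hl1, hl2⟩
    exact Or.inr ⟨hl2, eq_zero_budget_of_maximizer hS1 hS2 hT hl1 hl2 hτ hmax⟩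

lemma VD_zero_zero_le_zero_budget (hS2 : 0 < S2) (hT : 0 < T) :
    VD S1 S2 aD1 aD2 (0, 0) ≤ VD S1 S2 aD1 aD2 (0, T) := by
  have := mul_le_mul_of_nonneg_left (postVar_le hS2 hT.le) (sq_nonneg aD2)
  simp only [VD, zero_mul, add_zero, div_one]
  linarith

lemma lam1_nonpos (hD1 : 0 < aD1) (hD2 : 0 < aD2) (hβ : β ≤ 1 / 2) (hγ : 0 ≤ γ) :
    lam1 aD1 aD2 β γ ≤ 0 := by
  unfold lam1
  nlinarith [mul_nonneg (mul_nonneg hγ hD1.le) hD2.le, sq_nonneg aD1]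

lemma lam2_mono (hD1 : 0 < aD1) (hD2 : 0 < aD2) {γ' : ℝ} (hγγ' : γ ≤ γ') :
    lam2 aD1 aD2 β γ ≤ lam2 aD1 aD2 β γ' := by
  unfold lam2
  nlinarith [mul_nonneg (mul_nonneg (sub_nonneg.2 hγγ') hD1.le) hD2.le]

lemma VD_le_of_distortion_le (hS1 : 0 < S1) (hS2 : 0 < S2) (hT : 0 < T)
    (hD1 : 0 < aD1) (hD2 : 0 < aD2) (hβ : β ≤ 1 / 2) {γ' : ℝ} {τ' : ℝ × ℝ}
    (hγ : 0 ≤ γ) (hγγ' : γ ≤ γ') (h : IsEqAlloc S1 S2 T aD1 aD2 β γ τ)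
    (h' : IsEqAlloc S1 S2 T aD1 aD2 β γ' τ') :
    VD S1 S2 aD1 aD2 τ ≤ VD S1 S2 aD1 aD2 τ' := by
  have hl2 := lam2_mono (β := β) hD1 hD2 hγγ'
  rcases h.eq_of_lam1_nonpos hS1 hS2 hT (lam1_nonpos hD1 hD2 hβ hγ) with
    ⟨-, rfl⟩ | ⟨hpos, rfl⟩ <;>
  rcases h'.eq_of_lam1_nonpos hS1 hS2 hT (lam1_nonpos hD1 hD2 hβ (hγ.trans hγγ')) with
    ⟨hnonpos', rfl⟩ | ⟨-, rfl⟩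
  · exact le_rfl
  · exact VD_zero_zero_le_zero_budget hS2 hT
  · linarith
  · exact le_rfl

end NonpositiveFirstWeight

/-- Proposition 2(i) of the paper.  For an insensitive analyst
(`β ≤ 1/2`), the manager's expected equilibrium payoff weakly increases as the
analyst becomes more distorted. -/
theorem stmt_7
    (S1 S2 T aD1 aD2 β : ℝ)
    (hS1 : 0 < S1) (hS2 : 0 < S2) (hT : 0 < T)
    (hD : aD2 ≤ aD1) (hD2 : 0 < aD2)
    (hβ : β ∈ Set.Icc (0 : ℝ) (1 / 2)) :
    ∀ γ ∈ Gam aD1 aD2 β, ∀ γ' ∈ Gam aD1 aD2 β,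
      ((0 ≤ γ ∧ γ ≤ γ') ∨ (γ' ≤ γ ∧ γ ≤ 0)) →
      ∀ τ τ', IsEqAlloc S1 S2 T aD1 aD2 β γ τ → IsEqAlloc S1 S2 T aD1 aD2 β γ' τ' →
        VD S1 S2 aD1 aD2 τ ≤ VD S1 S2 aD1 aD2 τ' := by
  intro γ _ γ' _ hγγ' τ τ' hτ hτ'
  have hD1 : 0 < aD1 := hD2.trans_le hD
  rcases hγγ' with ⟨hγ, hle⟩ | ⟨hle, hγ⟩
  · exact VD_le_of_distortion_le hS1 hS2 hT hD1 hD2 hβ.2 hγ hle hτ hτ'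
  · rw [← VD_swap (τ := τ), ← VD_swap (τ := τ')]
    exact VD_le_of_distortion_le hS2 hS1 hT hD2 hD1 hβ.2 (neg_nonneg.2 hγ) (neg_le_neg hle)
      hτ.swap hτ'.swap
end
end

section
/- In the organization setting with α^D₁, α^D₂ > 0, fix a sensitivity level β > 1/2. Then the manager's expected equilibrium payoff weakly decreases as the analyst becomes more distorted: for any γ, γ' ∈ Γ(β) with either 0 ≤ γ ≤ γ' or γ' ≤ γ ≤ 0, one has V^D(τ*(β, γ')) ≤ V^D(τ*(β, γ)). -/
noncomputable section

/-!
Since `λ₁ + λ₂ = (2β − 1)((α^D₁)² + (α^D₂)²) > 0`, the equilibrium allocation always maximizes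
`G_{β,γ}`, and `G_{β,γ} = (2β − 1) V^D + γ Δ` with `Δ(τ) = 2 α^D₁ α^D₂ (Σ̂₁(τ₁) − Σ̂₂(τ₂))`.
Comparing the two optimality conditions gives `(γ' − γ)(Δ(τ') − Δ(τ)) ≥ 0`, so when `γ` and
`γ' − γ` have the same sign also `γ (Δ(τ') − Δ(τ)) ≥ 0`, and then optimality of `τ` for `γ`
forces `V^D(τ') ≤ V^D(τ)`. For `γ = γ'` one needs that the maximizer is unique: it is the
corner `(0, T)` or `(T, 0)` when one `λ_k` is nonpositive, and otherwise `G_{β,γ}` is strictly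
concave because each `Σ̂_k` is strictly convex.
-/

open Set

-- `postVar Σ⁰ₖ τₖ` is the posterior variance `Σ̂ₖ(τₖ)`.
def postVar (S t : ℝ) : ℝ := S / (1 + t * S)

lemma strictAntiOn_postVar {S : ℝ} (hS : 0 < S) : StrictAntiOn (postVar S) (Ici 0) := by
  rintro a (ha : 0 ≤ a) b - hab
  exact div_lt_div_of_pos_left hS (by positivity) (by nlinarith)

lemma postVar_add_postVar_sub_two_mul_postVar_midpoint {S a b : ℝ} (hS : 0 < S) (ha : 0 ≤ a)
    (hb : 0 ≤ b) :
    postVar S a + postVar S b - 2 * postVar S ((a + b) / 2)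
      = S ^ 3 * (a - b) ^ 2 / ((1 + a * S) * (1 + b * S) * (2 + (a + b) * S)) := by
  have : 0 < 1 + a * S := by positivity
  have : 0 < 1 + b * S := by positivity
  have : 0 < 2 + (a + b) * S := by positivity
  unfold postVar
  field_simp
  ring

lemma two_mul_postVar_midpoint_lt {S a b : ℝ} (hS : 0 < S) (ha : 0 ≤ a) (hb : 0 ≤ b)
    (hab : a ≠ b) : 2 * postVar S ((a + b) / 2) < postVar S a + postVar S b := by
  rw [← sub_pos, postVar_add_postVar_sub_two_mul_postVar_midpoint hS ha hb]
  have := sub_ne_zero.2 hab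
  positivity

lemma two_mul_postVar_midpoint_le {S a b : ℝ} (hS : 0 < S) (ha : 0 ≤ a) (hb : 0 ≤ b) :
    2 * postVar S ((a + b) / 2) ≤ postVar S a + postVar S b := by
  rcases eq_or_ne a b with rfl | hab
  · rw [add_self_div_two, two_mul]
  · exact (two_mul_postVar_midpoint_lt hS ha hb hab).le

def negWeightedPostVar (S1 S2 l1 l2 : ℝ) (τ : ℝ × ℝ) : ℝ :=
  -l1 * postVar S1 τ.1 - l2 * postVar S2 τ.2

lemma negWeightedPostVar_comp_swap (S1 S2 l1 l2 : ℝ) :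
    negWeightedPostVar S1 S2 l1 l2 ∘ Prod.swap = negWeightedPostVar S2 S1 l2 l1 := by
  ext τ
  simp only [Function.comp, negWeightedPostVar, Prod.fst_swap, Prod.snd_swap]
  ring

lemma mapsTo_swap_Talloc (T : ℝ) : MapsTo Prod.swap (Talloc T) (Talloc T) :=
  fun _ ⟨h1, h2, h12⟩ => ⟨h2, h1, by rw [Prod.fst_swap, Prod.snd_swap, add_comm]; exact h12⟩

section Maximizer

variable {S1 S2 T l1 l2 : ℝ} {τ τ' : ℝ × ℝ}

lemma eq_zero_budget_of_isMaxOn (hS1 : 0 < S1) (hS2 : 0 < S2) (hl1 : l1 ≤ 0) (hl2 : 0 < l2)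
    (hτ : τ ∈ Talloc T) (hmax : IsMaxOn (negWeightedPostVar S1 S2 l1 l2) (Talloc T) τ) :
    τ = (0, T) := by
  obtain ⟨h1, h2, h12⟩ := hτ
  have hcorner : (0, T) ∈ Talloc T := ⟨le_rfl, by linarith, by simp⟩
  have hG : negWeightedPostVar S1 S2 l1 l2 (0, T) ≤ negWeightedPostVar S1 S2 l1 l2 τ :=
    hmax hcorner
  have hpv1 : -l1 * postVar S1 τ.1 ≤ -l1 * postVar S1 0 :=
    mul_le_mul_of_nonneg_left ((strictAntiOn_postVar hS1).antitoneOn self_mem_Ici h1 h1)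
      (neg_nonneg.2 hl1)
  have hpv2 : postVar S2 τ.2 ≤ postVar S2 T := by
    refine le_of_mul_le_mul_left ?_ hl2
    unfold negWeightedPostVar at hG
    linarith
  have hT2 : T ≤ τ.2 := ((strictAntiOn_postVar hS2).le_iff_ge h2 (mem_Ici.2 (by linarith))).1 hpv2
  exact Prod.ext (by simp only; linarith) (by simp only; linarith)

lemma eq_of_isMaxOn_of_pos (hS1 : 0 < S1) (hS2 : 0 < S2) (hl1 : 0 < l1) (hl2 : 0 < l2)
    (hτ : τ ∈ Talloc T) (hτ' : τ' ∈ Talloc T)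
    (hmax : IsMaxOn (negWeightedPostVar S1 S2 l1 l2) (Talloc T) τ)
    (hmax' : IsMaxOn (negWeightedPostVar S1 S2 l1 l2) (Talloc T) τ') : τ = τ' := by
  by_contra hne
  obtain ⟨a1, a2, a12⟩ := hτ
  obtain ⟨b1, b2, b12⟩ := hτ'
  set m : ℝ × ℝ := ((τ.1 + τ'.1) / 2, (τ.2 + τ'.2) / 2)
  have hm : m ∈ Talloc T := ⟨by positivity, by positivity, by simp only [m]; linarith⟩
  have hG : negWeightedPostVar S1 S2 l1 l2 m ≤ negWeightedPostVar S1 S2 l1 l2 τ := hmax hm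
  have hG' : negWeightedPostVar S1 S2 l1 l2 m ≤ negWeightedPostVar S1 S2 l1 l2 τ' := hmax' hm
  have hle1 := mul_le_mul_of_nonneg_left (two_mul_postVar_midpoint_le hS1 a1 b1) hl1.le
  have hle2 := mul_le_mul_of_nonneg_left (two_mul_postVar_midpoint_le hS2 a2 b2) hl2.le
  unfold negWeightedPostVar at hG hG'
  rcases not_and_or.1 (mt Prod.ext_iff.2 hne) with h | h
  · have := mul_lt_mul_of_pos_left (two_mul_postVar_midpoint_lt hS1 a1 b1 h) hl1
    linarith
  · have := mul_lt_mul_of_pos_left (two_mul_postVar_midpoint_lt hS2 a2 b2 h) hl2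
    linarith

lemma eq_of_isMaxOn (hS1 : 0 < S1) (hS2 : 0 < S2) (hl : 0 < l1 + l2)
    (hτ : τ ∈ Talloc T) (hτ' : τ' ∈ Talloc T)
    (hmax : IsMaxOn (negWeightedPostVar S1 S2 l1 l2) (Talloc T) τ)
    (hmax' : IsMaxOn (negWeightedPostVar S1 S2 l1 l2) (Talloc T) τ') : τ = τ' := by
  rcases le_or_gt l1 0 with hl1 | hl1
  · rw [eq_zero_budget_of_isMaxOn hS1 hS2 hl1 (by linarith) hτ hmax,
      eq_zero_budget_of_isMaxOn hS1 hS2 hl1 (by linarith) hτ' hmax']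
  rcases le_or_gt l2 0 with hl2 | hl2
  · have swap_eq {σ : ℝ × ℝ} (hσ : σ ∈ Talloc T)
        (hσmax : IsMaxOn (negWeightedPostVar S1 S2 l1 l2) (Talloc T) σ) : σ.swap = (0, T) := by
      refine eq_zero_budget_of_isMaxOn hS2 hS1 hl2 hl1 (mapsTo_swap_Talloc T hσ) ?_
      rw [← negWeightedPostVar_comp_swap]
      exact hσmax.comp_mapsTo (mapsTo_swap_Talloc T) σ.swap_swap
    exact Prod.swap_injective ((swap_eq hτ hmax).trans (swap_eq hτ' hmax').symm)
  exact eq_of_isMaxOn_of_pos hS1 hS2 hl1 hl2 hτ hτ' hmax hmax'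

end Maximizer

lemma le_of_isMaxOn_add_mul {α : Type*} {s : Set α} {V D : α → ℝ} {c γ γ' : ℝ} {x x' : α}
    (hc : 0 < c) (hγ : 0 ≤ γ * (γ' - γ)) (hne : γ ≠ γ') (hx : x ∈ s) (hx' : x' ∈ s)
    (hmax : IsMaxOn (fun y => c * V y + γ * D y) s x)
    (hmax' : IsMaxOn (fun y => c * V y + γ' * D y) s x') : V x' ≤ V x := by
  have h : c * V x' + γ * D x' ≤ c * V x + γ * D x := hmax hx'
  have h' : c * V x + γ' * D x ≤ c * V x' + γ' * D x' := hmax' hx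
  have hD : 0 ≤ (γ' - γ) * (D x' - D x) := by linarith
  have hγD : 0 ≤ γ * (D x' - D x) := by
    refine nonneg_of_mul_nonneg_right (a := (γ' - γ) ^ 2) ?_
      (sq_pos_of_ne_zero (sub_ne_zero.2 hne.symm))
    calc 0 ≤ γ * (γ' - γ) * ((γ' - γ) * (D x' - D x)) := mul_nonneg hγ hD
      _ = (γ' - γ) ^ 2 * (γ * (D x' - D x)) := by ring
  exact le_of_mul_le_mul_left (by linarith) hc

lemma lam1_add_lam2_pos {aD1 aD2 β : ℝ} (γ : ℝ) (hD1 : 0 < aD1) (hβ : 1 / 2 < β) :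
    0 < lam1 aD1 aD2 β γ + lam2 aD1 aD2 β γ := by
  have hβ' : 0 < 2 * β - 1 := by linarith
  have : lam1 aD1 aD2 β γ + lam2 aD1 aD2 β γ = (2 * β - 1) * (aD1 ^ 2 + aD2 ^ 2) := by
    unfold lam1 lam2
    ring
  rw [this]
  positivity

lemma IsEqAlloc.isMaxOn {S1 S2 T aD1 aD2 β γ : ℝ} {τ : ℝ × ℝ}
    (hlam : 0 < lam1 aD1 aD2 β γ + lam2 aD1 aD2 β γ) (h : IsEqAlloc S1 S2 T aD1 aD2 β γ τ) :
    τ ∈ Talloc T ∧ IsMaxOn (Gfun S1 S2 aD1 aD2 β γ) (Talloc T) τ := by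
  rcases h with ⟨h1, h2, -⟩ | ⟨-, hmem, hmax⟩
  · linarith
  · exact ⟨hmem, hmax⟩

lemma Gfun_eq_negWeightedPostVar (S1 S2 aD1 aD2 β γ : ℝ) :
    Gfun S1 S2 aD1 aD2 β γ = negWeightedPostVar S1 S2 (lam1 aD1 aD2 β γ) (lam2 aD1 aD2 β γ) :=
  rfl

lemma Gfun_eq_VD_add_mul (S1 S2 aD1 aD2 β γ : ℝ) :
    Gfun S1 S2 aD1 aD2 β γ = fun τ => (2 * β - 1) * VD S1 S2 aD1 aD2 τ +
      γ * (2 * aD1 * aD2 * (postVar S1 τ.1 - postVar S2 τ.2)) := by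
  ext τ
  unfold Gfun VD lam1 lam2 postVar
  ring

theorem stmt_8_general
    (S1 S2 T aD1 aD2 β : ℝ)
    (hS1 : 0 < S1) (hS2 : 0 < S2)
    (hD1 : 0 < aD1)
    (hβ : 1 / 2 < β) :
    ∀ γ ∈ Gam aD1 aD2 β, ∀ γ' ∈ Gam aD1 aD2 β,
      ((0 ≤ γ ∧ γ ≤ γ') ∨ (γ' ≤ γ ∧ γ ≤ 0)) →
      ∀ τ τ', IsEqAlloc S1 S2 T aD1 aD2 β γ τ → IsEqAlloc S1 S2 T aD1 aD2 β γ' τ' →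
        VD S1 S2 aD1 aD2 τ' ≤ VD S1 S2 aD1 aD2 τ := by
  intro γ _ γ' _ hord τ τ' hτ hτ'
  obtain ⟨hmem, hmax⟩ := hτ.isMaxOn (lam1_add_lam2_pos γ hD1 hβ)
  obtain ⟨hmem', hmax'⟩ := hτ'.isMaxOn (lam1_add_lam2_pos γ' hD1 hβ)
  rcases eq_or_ne γ γ' with rfl | hne
  · rw [Gfun_eq_negWeightedPostVar] at hmax hmax'
    rw [eq_of_isMaxOn hS1 hS2 (lam1_add_lam2_pos γ hD1 hβ) hmem hmem' hmax hmax']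
  · rw [Gfun_eq_VD_add_mul] at hmax hmax'
    have hsign : 0 ≤ γ * (γ' - γ) := by
      rcases hord with ⟨h0, h1⟩ | ⟨h1, h0⟩
      · exact mul_nonneg h0 (sub_nonneg.2 h1)
      · exact mul_nonneg_of_nonpos_of_nonpos h0 (sub_nonpos.2 h1)
    exact le_of_isMaxOn_add_mul (by linarith) hsign hne hmem hmem' hmax hmax'

/-- Proposition 2(ii) of the paper.  For a sensitive analyst
(`β > 1/2`), the manager's expected equilibrium payoff weakly decreases as the
analyst becomes more distorted. -/
theorem stmt_8
    (S1 S2 T aD1 aD2 β : ℝ)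
    (hS1 : 0 < S1) (hS2 : 0 < S2) (hT : 0 < T)
    (hD1 : 0 < aD1) (hD2 : 0 < aD2)
    (hβ : 1 / 2 < β) :
    ∀ γ ∈ Gam aD1 aD2 β, ∀ γ' ∈ Gam aD1 aD2 β,
      ((0 ≤ γ ∧ γ ≤ γ') ∨ (γ' ≤ γ ∧ γ ≤ 0)) →
      ∀ τ τ', IsEqAlloc S1 S2 T aD1 aD2 β γ τ → IsEqAlloc S1 S2 T aD1 aD2 β γ' τ' →
        VD S1 S2 aD1 aD2 τ' ≤ VD S1 S2 aD1 aD2 τ :=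
  stmt_8_general S1 S2 T aD1 aD2 β hS1 hS2 hD1 hβ
end
end
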